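/- arXiv:2412.01481 — 2 statements merged into one kernel-verified Lean document; each statement's English description precedes it below -/
import Mathlib

section
/- Let V be a real vector space (e.g. a dual space X*) and D : V × V → [0,∞) satisfy the triangle inequality D(a, c) ≤ D(a, b) + D(b, c). Let κ_u, κ_w > 1, π_u, π_w, μ_u > 0, α_u, α_w ≥ 0, let (b_k), (c_k), (d_k) be tracking sequences, and suppose ξ_k, η_k ∈ V satisfy D(ξ_k, η_k) ≤ α_u b_{k+1} + α_w c_{k+1} for every k ≥ 0. Then: (i) for every ϑ > 0, every ζ ∈ V, and every k ≥ 0: (1/2) D(ξ_k, ζ)² ≤ ((1+ϑ)/2) D(η_k, ζ)² + ((1+ϑ^{−1})/2) ẽ_{1,k}; and (ii) for every N ≥ 1: Σ_{k=0}^{N−1} ẽ_{1,k} ≤ (P_1/π_u)( α_u κ/(κ−1) + α_w μ_u/(κ−1)² ) b_1² + (P_1/π_w)( α_w κ/(κ−1) ) c_1² + (P_1²/κ̄) Σ_{j=0}^{N−2} d_{j+1}². -/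
/-- ι_k := Σ_{m=1}^{k} κu^{−m} κw^{−(k+1−m)} (so ι_0 = 0). -/
noncomputable def iota (κu κw : ℝ) (k : ℕ) : ℝ :=
  ∑ m ∈ Finset.Icc 1 k, (κu ^ m)⁻¹ * (κw ^ (k + 1 - m))⁻¹

/-- ψ_j := α_u κ_u^{−j} π_u + α_w (ι_j μ_u π_u + κ_w^{−j} π_w). -/
noncomputable def psi (κu κw πu πw μu αu αw : ℝ) (j : ℕ) : ℝ :=
  αu * (κu ^ j)⁻¹ * πu + αw * (iota κu κw j * μu * πu + (κw ^ j)⁻¹ * πw)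

/-- P_p := (κ̄/p) Σ_{j=0}^{∞} p^j ψ_j. -/
noncomputable def Pconst (κu κw πu πw μu αu αw p : ℝ) : ℝ :=
  (max κu κw / p) * ∑' j : ℕ, p ^ j * psi κu κw πu πw μu αu αw j

/-- ẽ_{p,k}. -/
noncomputable def etilde (κu κw πu πw μu αu αw p : ℝ) (b c d : ℕ → ℝ) (k : ℕ) : ℝ :=
  Pconst κu κw πu πw μu αu αw p * (αu * (κu ^ k)⁻¹ + αw * iota κu κw k * μu) / (πu * p ^ k)
      * b 1 ^ 2
    + Pconst κu κw πu πw μu αu αw p * αw * (κw ^ k)⁻¹ / (πw * p ^ k) * c 1 ^ 2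
    + ∑ j ∈ Finset.range k,
        Pconst κu κw πu πw μu αu αw p * psi κu κw πu πw μu αu αw (k - j) / p ^ (k - j)
          * d (j + 1) ^ 2


section AuxStmt4
open Finset

private lemma iota_nonneg' {κu κw : ℝ} (hκu : 0 ≤ κu) (hκw : 0 ≤ κw) (k : ℕ) :
    0 ≤ iota κu κw k :=
  Finset.sum_nonneg fun _ _ => mul_nonneg (inv_nonneg.2 (pow_nonneg hκu _))
    (inv_nonneg.2 (pow_nonneg hκw _))

private lemma iota_succ' {κu κw : ℝ} (k : ℕ) :
    iota κu κw (k + 1) = κw⁻¹ * (iota κu κw k + (κu ^ (k + 1))⁻¹) := by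
  unfold iota
  rw [Finset.sum_Icc_succ_top (by omega : 1 ≤ k + 1)]
  have h1 : ∀ m ∈ Finset.Icc 1 k,
      (κu ^ m)⁻¹ * (κw ^ (k + 1 + 1 - m))⁻¹ = κw⁻¹ * ((κu ^ m)⁻¹ * (κw ^ (k + 1 - m))⁻¹) := by
    intro m hm
    have hm' : m ≤ k := (Finset.mem_Icc.1 hm).2
    have h2 : k + 1 + 1 - m = (k + 1 - m) + 1 := by omega
    rw [h2, pow_succ, mul_inv]; ring
  rw [Finset.sum_congr rfl h1, ← Finset.mul_sum]
  have h3 : k + 1 + 1 - (k + 1) = 1 := by omega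
  rw [h3, pow_one]
  ring

private lemma psi_nonneg' {κu κw πu πw μu αu αw : ℝ} (hκu : 0 ≤ κu) (hκw : 0 ≤ κw)
    (hπu : 0 ≤ πu) (hπw : 0 ≤ πw) (hμu : 0 ≤ μu) (hαu : 0 ≤ αu) (hαw : 0 ≤ αw) (j : ℕ) :
    0 ≤ psi κu κw πu πw μu αu αw j := by
  have h := iota_nonneg' hκu hκw j
  have h1 : (0:ℝ) ≤ (κu ^ j)⁻¹ := inv_nonneg.2 (pow_nonneg hκu _)
  have h2 : (0:ℝ) ≤ (κw ^ j)⁻¹ := inv_nonneg.2 (pow_nonneg hκw _)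
  unfold psi
  have := mul_nonneg (mul_nonneg hαu h1) hπu
  have := mul_nonneg hαw (add_nonneg (mul_nonneg (mul_nonneg h hμu) hπu) (mul_nonneg h2 hπw))
  linarith

private lemma psi_eq' {κu κw πu πw μu αu αw : ℝ} (k : ℕ) :
    psi κu κw πu πw μu αu αw k
      = (αu * (κu ^ k)⁻¹ + αw * iota κu κw k * μu) * πu + αw * (κw ^ k)⁻¹ * πw := by
  unfold psi; ring

private lemma psi_step' {κu κw πu πw μu αu αw : ℝ} (hκu : 1 < κu) (hκw : 1 < κw)
    (hπu : 0 < πu) (hπw : 0 < πw) (hμu : 0 < μu) (hαu : 0 ≤ αu) (hαw : 0 ≤ αw) (k : ℕ) :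
    psi κu κw πu πw μu αu αw k ≤ max κu κw * psi κu κw πu πw μu αu αw (k + 1) := by
  have h0u : (0:ℝ) < κu := by linarith
  have h0w : (0:ℝ) < κw := by linarith
  have hiu : (0:ℝ) ≤ (κu ^ k)⁻¹ := by positivity
  have hiw : (0:ℝ) ≤ (κw ^ k)⁻¹ := by positivity
  have hι : 0 ≤ iota κu κw k := iota_nonneg' h0u.le h0w.le k
  have e1 : 1 ≤ κu⁻¹ * max κu κw := by
    rw [le_inv_mul_iff₀ h0u, mul_one]; exact le_max_left _ _
  have e2 : 1 ≤ κw⁻¹ * max κu κw := by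
    rw [le_inv_mul_iff₀ h0w, mul_one]; exact le_max_right _ _
  have hinvu : (0:ℝ) ≤ κu⁻¹ := by positivity
  have hinvw : (0:ℝ) ≤ κw⁻¹ := by positivity
  have hb0 : (0:ℝ) ≤ max κu κw := le_trans h0u.le (le_max_left _ _)
  unfold psi
  rw [iota_succ', pow_succ, pow_succ, mul_inv, mul_inv]
  have h1 : 0 ≤ αu * πu * (κu ^ k)⁻¹ * (κu⁻¹ * max κu κw - 1) := by
    have := sub_nonneg.2 e1
    positivity
  have h2 : 0 ≤ αw * πw * (κw ^ k)⁻¹ * (κw⁻¹ * max κu κw - 1) := by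
    have := sub_nonneg.2 e2
    positivity
  have h3 : 0 ≤ αw * μu * πu * iota κu κw k * (κw⁻¹ * max κu κw - 1) := by
    have := sub_nonneg.2 e2
    positivity
  have h4 : 0 ≤ αw * μu * πu * (max κu κw * κw⁻¹ * ((κu ^ k)⁻¹ * κu⁻¹)) := by positivity
  nlinarith [h1, h2, h3, h4]

private lemma geom_summable' {κ : ℝ} (hκ : 1 < κ) : Summable (fun j : ℕ => (κ ^ j)⁻¹) := by
  simp_rw [← inv_pow]
  exact summable_geometric_of_lt_one (by positivity) (inv_lt_one_of_one_lt₀ hκ)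

private lemma geom_sum_le' {κ κ' : ℝ} (hκ' : 1 < κ') (hκ : κ' ≤ κ) (N : ℕ) :
    ∑ k ∈ Finset.range N, (κ ^ k)⁻¹ ≤ κ' / (κ' - 1) := by
  have h1 : (1:ℝ) < κ := lt_of_lt_of_le hκ' hκ
  have h0 : (0:ℝ) < κ := by linarith
  have hle : ∑ k ∈ Finset.range N, (κ ^ k)⁻¹ ≤ ∑' j : ℕ, ((κ:ℝ)⁻¹) ^ j := by
    have := Summable.sum_le_tsum (f := fun j : ℕ => (κ ^ j)⁻¹) (Finset.range N)
      (fun i _ => by positivity) (geom_summable' h1)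
    simpa [inv_pow] using this
  have heq : ∑' j : ℕ, ((κ:ℝ)⁻¹) ^ j = (1 - κ⁻¹)⁻¹ :=
    tsum_geometric_of_lt_one (by positivity) (inv_lt_one_of_one_lt₀ h1)
  have heq2 : (1 - κ⁻¹)⁻¹ = κ / (κ - 1) := by
    rw [show 1 - κ⁻¹ = (κ - 1) / κ by field_simp, inv_div]
  have hfin : κ / (κ - 1) ≤ κ' / (κ' - 1) := by
    rw [div_le_div_iff₀ (by linarith) (by linarith)]
    nlinarith
  calc ∑ k ∈ Finset.range N, (κ ^ k)⁻¹ ≤ (1 - κ⁻¹)⁻¹ := heq ▸ hle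
    _ = κ / (κ - 1) := heq2
    _ ≤ κ' / (κ' - 1) := hfin

private lemma summable_k_geo' {r : ℝ} (h0 : 0 ≤ r) (h1 : r < 1) :
    Summable (fun k : ℕ => (k : ℝ) * r ^ (k + 1)) := by
  have hs : Summable (fun k : ℕ => (k : ℝ) ^ 1 * r ^ k) :=
    summable_pow_mul_geometric_of_norm_lt_one 1 (by rwa [Real.norm_eq_abs, abs_of_nonneg h0])
  have := hs.mul_left r
  refine this.congr fun n => ?_
  rw [pow_succ']
  ring

private lemma iota_le' {κu κw : ℝ} (hκu : 1 < κu) (hκw : 1 < κw) (k : ℕ) :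
    iota κu κw k ≤ (k : ℝ) * ((min κu κw)⁻¹) ^ (k + 1) := by
  have hκ : 1 < min κu κw := lt_min hκu hκw
  have h0 : (0:ℝ) < min κu κw := by linarith
  unfold iota
  have hterm : ∀ m ∈ Finset.Icc 1 k,
      (κu ^ m)⁻¹ * (κw ^ (k + 1 - m))⁻¹ ≤ ((min κu κw)⁻¹) ^ (k + 1) := by
    intro m hm
    have hm' : m ≤ k := (Finset.mem_Icc.1 hm).2
    have h1 : (min κu κw) ^ m ≤ κu ^ m :=
      pow_le_pow_left₀ h0.le (min_le_left _ _) m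
    have h2 : (min κu κw) ^ (k + 1 - m) ≤ κw ^ (k + 1 - m) :=
      pow_le_pow_left₀ h0.le (min_le_right _ _) _
    have hi1 : (κu ^ m)⁻¹ ≤ ((min κu κw) ^ m)⁻¹ := by
      apply inv_anti₀ (by positivity) h1
    have hi2 : (κw ^ (k + 1 - m))⁻¹ ≤ ((min κu κw) ^ (k + 1 - m))⁻¹ := by
      apply inv_anti₀ (by positivity) h2
    calc (κu ^ m)⁻¹ * (κw ^ (k + 1 - m))⁻¹
        ≤ ((min κu κw) ^ m)⁻¹ * ((min κu κw) ^ (k + 1 - m))⁻¹ := by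
          apply mul_le_mul hi1 hi2 (by positivity) (by positivity)
      _ = ((min κu κw)⁻¹) ^ (k + 1) := by
          rw [← inv_pow, ← inv_pow, ← pow_add]
          congr 1
          omega
  calc iota κu κw k ≤ ∑ _m ∈ Finset.Icc 1 k, ((min κu κw)⁻¹) ^ (k + 1) :=
        Finset.sum_le_sum hterm
    _ = (k : ℝ) * ((min κu κw)⁻¹) ^ (k + 1) := by
        rw [Finset.sum_const, Nat.card_Icc]
        simp

private lemma iota_summable' {κu κw : ℝ} (hκu : 1 < κu) (hκw : 1 < κw) :
    Summable (iota κu κw) := by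
  have hκ : 1 < min κu κw := lt_min hκu hκw
  exact Summable.of_nonneg_of_le (iota_nonneg' (by linarith) (by linarith))
    (iota_le' hκu hκw)
    (summable_k_geo' (by positivity) (inv_lt_one_of_one_lt₀ hκ))

private lemma iota_sum_le' {κu κw : ℝ} (hκu : 1 < κu) (hκw : 1 < κw) (N : ℕ) :
    ∑ k ∈ Finset.range N, iota κu κw k ≤ 1 / (min κu κw - 1) ^ 2 := by
  have hκ : 1 < min κu κw := lt_min hκu hκw
  have h0 : (0:ℝ) < min κu κw := by linarith
  set κ := min κu κw
  have hr1 : κ⁻¹ < 1 := inv_lt_one_of_one_lt₀ hκ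
  have hr0 : (0:ℝ) ≤ κ⁻¹ := by positivity
  have hs := summable_k_geo' hr0 hr1
  have hnorm : ‖(κ:ℝ)⁻¹‖ < 1 := by rwa [Real.norm_eq_abs, abs_of_nonneg hr0]
  calc ∑ k ∈ Finset.range N, iota κu κw k
      ≤ ∑ k ∈ Finset.range N, (k : ℝ) * (κ⁻¹) ^ (k + 1) :=
        Finset.sum_le_sum fun k _ => iota_le' hκu hκw k
    _ ≤ ∑' k : ℕ, (k : ℝ) * (κ⁻¹) ^ (k + 1) :=
        Summable.sum_le_tsum _ (fun k _ => by positivity) hs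
    _ = κ⁻¹ * ∑' k : ℕ, (k : ℝ) * (κ⁻¹) ^ k := by
        rw [← tsum_mul_left]
        congr 1
        funext k
        rw [pow_succ']
        ring
    _ = κ⁻¹ * (κ⁻¹ / (1 - κ⁻¹) ^ 2) := by
        rw [tsum_coe_mul_geometric_of_norm_lt_one hnorm]
    _ = 1 / (κ - 1) ^ 2 := by
        have hκ0 : κ ≠ 0 := by positivity
        have hκ1 : κ - 1 ≠ 0 := ne_of_gt (by linarith)
        rw [show (1:ℝ) - κ⁻¹ = (κ - 1) / κ by field_simp]
        field_simp

private lemma psi_summable' {κu κw πu πw μu αu αw : ℝ} (hκu : 1 < κu) (hκw : 1 < κw) :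
    Summable (psi κu κw πu πw μu αu αw) := by
  unfold psi
  apply Summable.add
  · exact (((geom_summable' hκu).mul_left αu).mul_right πu)
  · apply Summable.mul_left
    apply Summable.add
    · exact (((iota_summable' hκu hκw).mul_right μu).mul_right πu)
    · exact ((geom_summable' hκw).mul_right πw)

private lemma weight_le' {κu κw πu πw μu αu αw : ℝ} (hκu : 1 < κu) (hκw : 1 < κw)
    (hπu : 0 < πu) (hπw : 0 < πw) (hμu : 0 < μu) (hαu : 0 ≤ αu) (hαw : 0 ≤ αw) (k : ℕ) :
    psi κu κw πu πw μu αu αw k + ∑ j ∈ Finset.range k, psi κu κw πu πw μu αu αw (j + 1)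
      ≤ max κu κw * ∑' j : ℕ, psi κu κw πu πw μu αu αw j := by
  have hκb : 1 ≤ max κu κw := le_trans hκu.le (le_max_left _ _)
  have hψ0 : ∀ j, 0 ≤ psi κu κw πu πw μu αu αw j :=
    psi_nonneg' (by linarith) (by linarith) hπu.le hπw.le hμu.le hαu hαw
  have hsum : Summable (psi κu κw πu πw μu αu αw) := psi_summable' hκu hκw
  have h1 : psi κu κw πu πw μu αu αw k ≤ max κu κw * psi κu κw πu πw μu αu αw (k + 1) :=
    psi_step' hκu hκw hπu hπw hμu hαu hαw k
  have h2 : ∑ j ∈ Finset.range (k + 1), psi κu κw πu πw μu αu αw (j + 1)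
      ≤ ∑' j : ℕ, psi κu κw πu πw μu αu αw j := by
    have h3 : ∑ j ∈ Finset.range (k + 2), psi κu κw πu πw μu αu αw j
        ≤ ∑' j : ℕ, psi κu κw πu πw μu αu αw j :=
      Summable.sum_le_tsum _ (fun j _ => hψ0 j) hsum
    rw [Finset.sum_range_succ'] at h3
    linarith [hψ0 0]
  have h4 : ∑ j ∈ Finset.range k, psi κu κw πu πw μu αu αw (j + 1)
      ≤ max κu κw * ∑ j ∈ Finset.range k, psi κu κw πu πw μu αu αw (j + 1) := by
    have h5 : 0 ≤ ∑ j ∈ Finset.range k, psi κu κw πu πw μu αu αw (j + 1) :=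
      Finset.sum_nonneg fun j _ => hψ0 _
    nlinarith
  rw [Finset.sum_range_succ] at h2
  nlinarith [mul_le_mul_of_nonneg_left h2 (by linarith : (0:ℝ) ≤ max κu κw)]

private lemma swap_sum' (f x : ℕ → ℝ) (N : ℕ) :
    ∑ k ∈ Finset.range N, ∑ j ∈ Finset.range k, f (k - j) * x j
      = ∑ j ∈ Finset.range (N - 1), (∑ i ∈ Finset.range (N - 1 - j), f (i + 1)) * x j := by
  induction N with
  | zero => simp
  | succ N ih =>
    rw [Finset.sum_range_succ, ih]
    cases N with
    | zero => simp
    | succ M =>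
      have hl : (M + 1 : ℕ) - 1 = M := rfl
      have hr : (M + 1 + 1 : ℕ) - 1 = M + 1 := rfl
      rw [hl, hr]
      rw [Finset.sum_range_succ (fun j => f (M + 1 - j) * x j) M]
      rw [Finset.sum_range_succ (fun j => (∑ i ∈ Finset.range (M + 1 - j), f (i + 1)) * x j) M]
      have hterm : ∀ j ∈ Finset.range M,
          (∑ i ∈ Finset.range (M + 1 - j), f (i + 1)) * x j
            = (∑ i ∈ Finset.range (M - j), f (i + 1)) * x j + f (M + 1 - j) * x j := by
        intro j hj
        have hj' : j < M := Finset.mem_range.1 hj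
        have h1 : M + 1 - j = (M - j) + 1 := by omega
        rw [h1, Finset.sum_range_succ]
        have h2 : M - j + 1 = M + 1 - j := by omega
        rw [h2]
        ring
      rw [Finset.sum_congr rfl hterm, Finset.sum_add_distrib]
      have h3 : M + 1 - M = 1 := by omega
      rw [h3]
      simp [Finset.sum_range_succ]
      ring

private lemma weighted_cauchy' (Ak Bk πu πw b1 c1 : ℝ) (ψd x : ℕ → ℝ) (k : ℕ)
    (hA : 0 ≤ Ak) (hB : 0 ≤ Bk) (hπu : 0 < πu) (hπw : 0 < πw)
    (hψ : ∀ j, 0 ≤ ψd j) (hx : ∀ j, 0 ≤ x j) :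
    (Ak * b1 + Bk * c1 + ∑ j ∈ Finset.range k, ψd j * x j) ^ 2
      ≤ (Ak * πu + Bk * πw + ∑ j ∈ Finset.range k, ψd j)
        * (Ak / πu * b1 ^ 2 + Bk / πw * c1 ^ 2 + ∑ j ∈ Finset.range k, ψd j * x j ^ 2) := by
  classical
  set F : ℕ → ℝ := fun i => if i = 0 then Ak * πu else if i = 1 then Bk * πw else ψd (i - 2)
    with hF
  set G : ℕ → ℝ := fun i => if i = 0 then Ak / πu * b1 ^ 2 else if i = 1 then Bk / πw * c1 ^ 2
    else ψd (i - 2) * x (i - 2) ^ 2 with hG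
  set R : ℕ → ℝ := fun i => if i = 0 then Ak * b1 else if i = 1 then Bk * c1
    else ψd (i - 2) * x (i - 2) with hR
  have key := Finset.sum_sq_le_sum_mul_sum_of_sq_eq_mul (Finset.range (k + 2))
    (r := R) (f := F) (g := G) ?_ ?_ ?_
  · have expand : ∀ (H : ℕ → ℝ), ∑ i ∈ Finset.range (k + 2), H i
        = H 0 + H 1 + ∑ j ∈ Finset.range k, H (j + 2) := by
      intro H
      rw [Finset.sum_range_succ', Finset.sum_range_succ']
      rw [Finset.sum_congr rfl (fun i _ => rfl :
        ∀ i ∈ Finset.range k, H (i + 1 + 1) = H (i + 2))]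
      ring
    have e2 : ∀ j, F (j + 2) = ψd j := by
      intro j; simp [hF]
    have e3 : ∀ j, G (j + 2) = ψd j * x j ^ 2 := by
      intro j; simp [hG]
    have e4 : ∀ j, R (j + 2) = ψd j * x j := by
      intro j; simp [hR]
    rw [expand F, expand G, expand R] at key
    simp only [e2, e3, e4] at key
    simpa [hF, hG, hR] using key
  · intro i _
    by_cases h0 : i = 0
    · simp [hF, h0]; positivity
    by_cases h1 : i = 1
    · simp [hF, h0, h1]; positivity
    · simp [hF, h0, h1]; exact hψ _
  · intro i _
    by_cases h0 : i = 0
    · simp [hG, h0]; positivity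
    by_cases h1 : i = 1
    · simp [hG, h0, h1]; positivity
    · simp [hG, h0, h1]
      exact mul_nonneg (hψ _) (sq_nonneg _)
  · intro i _
    by_cases h0 : i = 0
    · simp [hF, hG, hR, h0]
      field_simp
    by_cases h1 : i = 1
    · simp [hF, hG, hR, h0, h1]
      field_simp
    · simp [hF, hG, hR, h0, h1]
      ring

private lemma iota_zero' {κu κw : ℝ} : iota κu κw 0 = 0 := by
  unfold iota
  rw [show Finset.Icc 1 0 = (∅ : Finset ℕ) from Finset.Icc_eq_empty (by omega)]
  simp

end AuxStmt4

set_option maxHeartbeats 1000000 in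
theorem stmt4 {V : Type*} [AddCommGroup V] [Module ℝ V]
    (DV : V → V → ℝ)
    (hDV : ∀ a b, 0 ≤ DV a b)
    (htri : ∀ a b c : V, DV a c ≤ DV a b + DV b c)
    (κu κw πu πw μu αu αw : ℝ)
    (hκu : 1 < κu) (hκw : 1 < κw)
    (hπu : 0 < πu) (hπw : 0 < πw) (hμu : 0 < μu)
    (hαu : 0 ≤ αu) (hαw : 0 ≤ αw)
    (b c d : ℕ → ℝ)
    (hb : ∀ k, 0 ≤ b k) (hc : ∀ k, 0 ≤ c k) (hd : ∀ k, 0 ≤ d k)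
    (hrec1 : ∀ k, 1 ≤ k → κu * b (k + 1) ≤ b k + πu * d k)
    (hrec2 : ∀ k, 1 ≤ k → κw * c (k + 1) ≤ c k + μu * b (k + 1) + πw * d k)
    (ξ η : ℕ → V)
    (hξη : ∀ k : ℕ, DV (ξ k) (η k) ≤ αu * b (k + 1) + αw * c (k + 1)) :
    (∀ ϑ : ℝ, 0 < ϑ → ∀ ζ : V, ∀ k : ℕ,
      (1 / 2) * DV (ξ k) ζ ^ 2 ≤
        ((1 + ϑ) / 2) * DV (η k) ζ ^ 2
          + ((1 + ϑ⁻¹) / 2) * etilde κu κw πu πw μu αu αw 1 b c d k)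
    ∧ ∀ N : ℕ, 1 ≤ N →
        ∑ k ∈ Finset.range N, etilde κu κw πu πw μu αu αw 1 b c d k ≤
          Pconst κu κw πu πw μu αu αw 1 / πu
              * (αu * min κu κw / (min κu κw - 1) + αw * μu / (min κu κw - 1) ^ 2) * b 1 ^ 2
            + Pconst κu κw πu πw μu αu αw 1 / πw
                * (αw * min κu κw / (min κu κw - 1)) * c 1 ^ 2
            + Pconst κu κw πu πw μu αu αw 1 ^ 2 / max κu κw
                * ∑ j ∈ Finset.range (N - 1), d (j + 1) ^ 2 := by
  have h0u : (0:ℝ) < κu := by linarith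
  have h0w : (0:ℝ) < κw := by linarith
  have hκ : 1 < min κu κw := lt_min hκu hκw
  have hκb1 : 1 ≤ max κu κw := le_trans hκu.le (le_max_left _ _)
  have hκb0 : (0:ℝ) < max κu κw := by linarith
  have hψ0 : ∀ j, 0 ≤ psi κu κw πu πw μu αu αw j :=
    psi_nonneg' h0u.le h0w.le hπu.le hπw.le hμu.le hαu hαw
  have hψsum : Summable (psi κu κw πu πw μu αu αw) := psi_summable' hκu hκw
  have htψ0 : 0 ≤ ∑' j : ℕ, psi κu κw πu πw μu αu αw j := tsum_nonneg fun j => hψ0 j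
  obtain ⟨P, hPdef⟩ : ∃ x : ℝ, x = Pconst κu κw πu πw μu αu αw 1 := ⟨_, rfl⟩
  rw [← hPdef]
  have hPeq : P = max κu κw * ∑' j : ℕ, psi κu κw πu πw μu αu αw j := by
    rw [hPdef]; unfold Pconst; simp
  have hP0 : 0 ≤ P := by rw [hPeq]; positivity
  -- bound on b
  have hbb : ∀ k : ℕ, b (k + 1) ≤ (κu ^ k)⁻¹ * b 1
      + ∑ j ∈ Finset.range k, (κu ^ (k - j))⁻¹ * (πu * d (j + 1)) := by
    intro k
    induction k with
    | zero => simp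
    | succ k ih =>
      have hrec := hrec1 (k + 1) (by omega)
      have step : b (k + 1 + 1) ≤ κu⁻¹ * (b (k + 1) + πu * d (k + 1)) := by
        rw [le_inv_mul_iff₀ h0u]; exact hrec
      have hterm : ∀ j ∈ Finset.range k,
          (κu ^ (k + 1 - j))⁻¹ * (πu * d (j + 1))
            = κu⁻¹ * ((κu ^ (k - j))⁻¹ * (πu * d (j + 1))) := by
        intro j hj
        have hj' : j < k := Finset.mem_range.1 hj
        have h1 : k + 1 - j = (k - j) + 1 := by omega
        rw [h1, pow_succ, mul_inv]; ring
      have heq : (κu ^ (k + 1))⁻¹ * b 1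
            + ∑ j ∈ Finset.range (k + 1), (κu ^ (k + 1 - j))⁻¹ * (πu * d (j + 1))
          = κu⁻¹ * (((κu ^ k)⁻¹ * b 1
            + ∑ j ∈ Finset.range k, (κu ^ (k - j))⁻¹ * (πu * d (j + 1))) + πu * d (k + 1)) := by
        rw [Finset.sum_range_succ, Finset.sum_congr rfl hterm, ← Finset.mul_sum,
          show k + 1 - k = 1 by omega, pow_one, pow_succ, mul_inv]
        ring
      rw [heq]
      calc b (k + 1 + 1) ≤ κu⁻¹ * (b (k + 1) + πu * d (k + 1)) := step
        _ ≤ κu⁻¹ * (((κu ^ k)⁻¹ * b 1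
            + ∑ j ∈ Finset.range k, (κu ^ (k - j))⁻¹ * (πu * d (j + 1))) + πu * d (k + 1)) := by
          apply mul_le_mul_of_nonneg_left _ (by positivity)
          linarith
  -- bound on c
  have hcc : ∀ k : ℕ, c (k + 1) ≤ (κw ^ k)⁻¹ * c 1 + iota κu κw k * μu * b 1
      + ∑ j ∈ Finset.range k,
          (μu * πu * iota κu κw (k - j) + πw * (κw ^ (k - j))⁻¹) * d (j + 1) := by
    intro k
    induction k with
    | zero => simp [iota_zero']
    | succ k ih =>
      have hrec := hrec2 (k + 1) (by omega)
      have step : c (k + 1 + 1) ≤ κw⁻¹ * (c (k + 1) + μu * b (k + 1 + 1) + πw * d (k + 1)) := by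
        rw [le_inv_mul_iff₀ h0w]; exact hrec
      have hbk := hbb (k + 1)
      have hterm : ∀ j ∈ Finset.range (k + 1),
          (μu * πu * iota κu κw (k + 1 - j) + πw * (κw ^ (k + 1 - j))⁻¹) * d (j + 1)
            = κw⁻¹ * ((μu * πu * iota κu κw (k - j) + πw * (κw ^ (k - j))⁻¹) * d (j + 1))
              + κw⁻¹ * (μu * ((κu ^ (k + 1 - j))⁻¹ * (πu * d (j + 1)))) := by
        intro j hj
        have hj' : j < k + 1 := Finset.mem_range.1 hj
        have h1 : k + 1 - j = (k - j) + 1 := by omega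
        rw [h1, iota_succ', pow_succ (a := κw), mul_inv, ← h1]
        ring
      have heq : (κw ^ (k + 1))⁻¹ * c 1 + iota κu κw (k + 1) * μu * b 1
            + ∑ j ∈ Finset.range (k + 1),
                (μu * πu * iota κu κw (k + 1 - j) + πw * (κw ^ (k + 1 - j))⁻¹) * d (j + 1)
          = κw⁻¹ * (((κw ^ k)⁻¹ * c 1 + iota κu κw k * μu * b 1
              + ∑ j ∈ Finset.range k,
                  (μu * πu * iota κu κw (k - j) + πw * (κw ^ (k - j))⁻¹) * d (j + 1))
            + μu * ((κu ^ (k + 1))⁻¹ * b 1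
              + ∑ j ∈ Finset.range (k + 1), (κu ^ (k + 1 - j))⁻¹ * (πu * d (j + 1)))
            + πw * d (k + 1)) := by
        rw [Finset.sum_congr rfl hterm, Finset.sum_add_distrib, ← Finset.mul_sum,
          ← Finset.mul_sum,
          Finset.sum_range_succ
            (fun j => (μu * πu * iota κu κw (k - j) + πw * (κw ^ (k - j))⁻¹) * d (j + 1)) k,
          Nat.sub_self, iota_zero', pow_zero, iota_succ' (κu := κu) (κw := κw) k,
          pow_succ (a := κw), mul_inv, ← Finset.mul_sum]
        ring
      rw [heq]
      calc c (k + 1 + 1) ≤ κw⁻¹ * (c (k + 1) + μu * b (k + 1 + 1) + πw * d (k + 1)) := step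
        _ ≤ _ := by
          apply mul_le_mul_of_nonneg_left _ (by positivity)
          have h2 : μu * b (k + 1 + 1) ≤ μu * ((κu ^ (k + 1))⁻¹ * b 1
              + ∑ j ∈ Finset.range (k + 1), (κu ^ (k + 1 - j))⁻¹ * (πu * d (j + 1))) :=
            mul_le_mul_of_nonneg_left hbk hμu.le
          linarith
  -- etilde in factored form
  have hE : ∀ k : ℕ, etilde κu κw πu πw μu αu αw 1 b c d k
      = P * ((αu * (κu ^ k)⁻¹ + αw * iota κu κw k * μu) / πu * b 1 ^ 2
          + αw * (κw ^ k)⁻¹ / πw * c 1 ^ 2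
          + ∑ j ∈ Finset.range k, psi κu κw πu πw μu αu αw (k - j) * d (j + 1) ^ 2) := by
    intro k
    unfold etilde
    rw [← hPdef]
    simp only [one_pow, mul_one]
    rw [mul_add, mul_add, Finset.mul_sum]
    congr 1
    · congr 1 <;> ring
    · exact Finset.sum_congr rfl fun j _ => by ring
  -- key quadratic bound
  have hskey : ∀ k : ℕ, (αu * b (k + 1) + αw * c (k + 1)) ^ 2
      ≤ etilde κu κw πu πw μu αu αw 1 b c d k := by
    intro k
    have hA0 : 0 ≤ αu * (κu ^ k)⁻¹ + αw * iota κu κw k * μu := by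
      have := iota_nonneg' h0u.le h0w.le k
      positivity
    have hB0 : 0 ≤ αw * (κw ^ k)⁻¹ := by positivity
    have hT : αu * b (k + 1) + αw * c (k + 1)
        ≤ (αu * (κu ^ k)⁻¹ + αw * iota κu κw k * μu) * b 1 + (αw * (κw ^ k)⁻¹) * c 1
          + ∑ j ∈ Finset.range k, psi κu κw πu πw μu αu αw (k - j) * d (j + 1) := by
      have h1 := mul_le_mul_of_nonneg_left (hbb k) hαu
      have h2 := mul_le_mul_of_nonneg_left (hcc k) hαw
      have hcomb : αu * ((κu ^ k)⁻¹ * b 1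
            + ∑ j ∈ Finset.range k, (κu ^ (k - j))⁻¹ * (πu * d (j + 1)))
          + αw * ((κw ^ k)⁻¹ * c 1 + iota κu κw k * μu * b 1
            + ∑ j ∈ Finset.range k,
                (μu * πu * iota κu κw (k - j) + πw * (κw ^ (k - j))⁻¹) * d (j + 1))
          = (αu * (κu ^ k)⁻¹ + αw * iota κu κw k * μu) * b 1 + (αw * (κw ^ k)⁻¹) * c 1
            + ∑ j ∈ Finset.range k, psi κu κw πu πw μu αu αw (k - j) * d (j + 1) := by
        rw [show ∑ j ∈ Finset.range k, psi κu κw πu πw μu αu αw (k - j) * d (j + 1)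
            = ∑ j ∈ Finset.range k,
              (αu * ((κu ^ (k - j))⁻¹ * (πu * d (j + 1)))
                + αw * ((μu * πu * iota κu κw (k - j) + πw * (κw ^ (k - j))⁻¹) * d (j + 1)))
          from Finset.sum_congr rfl fun j _ => by unfold psi; ring,
          Finset.sum_add_distrib, ← Finset.mul_sum, ← Finset.mul_sum]
        ring
      linarith
    have hs0 : 0 ≤ αu * b (k + 1) + αw * c (k + 1) :=
      add_nonneg (mul_nonneg hαu (hb _)) (mul_nonneg hαw (hc _))
    have hcs := weighted_cauchy' (αu * (κu ^ k)⁻¹ + αw * iota κu κw k * μu) (αw * (κw ^ k)⁻¹)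
      πu πw (b 1) (c 1) (fun j => psi κu κw πu πw μu αu αw (k - j)) (fun j => d (j + 1)) k
      hA0 hB0 hπu hπw (fun j => hψ0 _) (fun j => hd _)
    have hW : (αu * (κu ^ k)⁻¹ + αw * iota κu κw k * μu) * πu + (αw * (κw ^ k)⁻¹) * πw
        + ∑ j ∈ Finset.range k, psi κu κw πu πw μu αu αw (k - j) ≤ P := by
      have hrefl : ∑ j ∈ Finset.range k, psi κu κw πu πw μu αu αw (k - j)
          = ∑ j ∈ Finset.range k, psi κu κw πu πw μu αu αw (j + 1) := by
        rw [← Finset.sum_range_reflect (fun i => psi κu κw πu πw μu αu αw (i + 1)) k]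
        apply Finset.sum_congr rfl
        intro j hj
        have := Finset.mem_range.1 hj
        congr 1
        omega
      rw [hrefl, ← psi_eq', hPeq]
      exact weight_le' hκu hκw hπu hπw hμu hαu hαw k
    have hG0 : 0 ≤ (αu * (κu ^ k)⁻¹ + αw * iota κu κw k * μu) / πu * b 1 ^ 2
        + αw * (κw ^ k)⁻¹ / πw * c 1 ^ 2
        + ∑ j ∈ Finset.range k, psi κu κw πu πw μu αu αw (k - j) * d (j + 1) ^ 2 := by
      have h1 : 0 ≤ ∑ j ∈ Finset.range k, psi κu κw πu πw μu αu αw (k - j) * d (j + 1) ^ 2 :=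
        Finset.sum_nonneg fun j _ => mul_nonneg (hψ0 _) (sq_nonneg _)
      positivity
    rw [hE k]
    calc (αu * b (k + 1) + αw * c (k + 1)) ^ 2
        ≤ ((αu * (κu ^ k)⁻¹ + αw * iota κu κw k * μu) * b 1 + (αw * (κw ^ k)⁻¹) * c 1
          + ∑ j ∈ Finset.range k, psi κu κw πu πw μu αu αw (k - j) * d (j + 1)) ^ 2 :=
          pow_le_pow_left₀ hs0 hT 2
      _ ≤ ((αu * (κu ^ k)⁻¹ + αw * iota κu κw k * μu) * πu + (αw * (κw ^ k)⁻¹) * πw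
          + ∑ j ∈ Finset.range k, psi κu κw πu πw μu αu αw (k - j))
          * ((αu * (κu ^ k)⁻¹ + αw * iota κu κw k * μu) / πu * b 1 ^ 2
            + αw * (κw ^ k)⁻¹ / πw * c 1 ^ 2
            + ∑ j ∈ Finset.range k, psi κu κw πu πw μu αu αw (k - j) * d (j + 1) ^ 2) := hcs
      _ ≤ P * _ := mul_le_mul_of_nonneg_right hW hG0
  constructor
  · -- part (i)
    intro ϑ hϑ ζ k
    have hY := hξη k
    have hkey := hskey k
    have hX := htri (ξ k) (η k) ζ
    have hE0 : 0 ≤ etilde κu κw πu πw μu αu αw 1 b c d k := le_trans (sq_nonneg _) hkey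
    have hy0 : 0 ≤ DV (ξ k) (η k) := hDV _ _
    have hz0 : 0 ≤ DV (η k) ζ := hDV _ _
    have hx0 : 0 ≤ DV (ξ k) ζ := hDV _ _
    have hY2 : DV (ξ k) (η k) ^ 2 ≤ etilde κu κw πu πw μu αu αw 1 b c d k :=
      le_trans (pow_le_pow_left₀ hy0 hY 2) hkey
    have hinvnn : (0:ℝ) ≤ ϑ⁻¹ := inv_nonneg.2 hϑ.le
    have hX2 : DV (ξ k) ζ ^ 2 ≤ (DV (ξ k) (η k) + DV (η k) ζ) ^ 2 := pow_le_pow_left₀ hx0 hX 2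
    have hexp : ϑ⁻¹ * (ϑ * DV (η k) ζ - DV (ξ k) (η k)) ^ 2
        = ϑ * DV (η k) ζ ^ 2 - 2 * (DV (ξ k) (η k) * DV (η k) ζ)
          + ϑ⁻¹ * DV (ξ k) (η k) ^ 2 := by
      field_simp
      ring
    have h2yz : 2 * (DV (ξ k) (η k) * DV (η k) ζ)
        ≤ ϑ * DV (η k) ζ ^ 2 + ϑ⁻¹ * DV (ξ k) (η k) ^ 2 := by
      have hnn := mul_nonneg hinvnn (sq_nonneg (ϑ * DV (η k) ζ - DV (ξ k) (η k)))
      rw [hexp] at hnn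
      linarith
    have hmulE := mul_le_mul_of_nonneg_left hY2 hinvnn
    nlinarith [hX2, h2yz, hY2, hmulE]
  · -- part (ii)
    intro N _
    have hE' : ∀ k : ℕ, etilde κu κw πu πw μu αu αw 1 b c d k
        = P * ((αu * (κu ^ k)⁻¹ + αw * iota κu κw k * μu) / πu * b 1 ^ 2)
          + P * (αw * (κw ^ k)⁻¹ / πw * c 1 ^ 2)
          + ∑ j ∈ Finset.range k, P * (psi κu κw πu πw μu αu αw (k - j) * d (j + 1) ^ 2) := by
      intro k
      rw [hE k, mul_add, mul_add, Finset.mul_sum]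
    have htail : ∀ n : ℕ, ∑ i ∈ Finset.range n, psi κu κw πu πw μu αu αw (i + 1)
        ≤ ∑' j : ℕ, psi κu κw πu πw μu αu αw j := by
      intro n
      have h3 : ∑ j ∈ Finset.range (n + 1), psi κu κw πu πw μu αu αw j
          ≤ ∑' j : ℕ, psi κu κw πu πw μu αu αw j :=
        Summable.sum_le_tsum _ (fun j _ => hψ0 j) hψsum
      rw [Finset.sum_range_succ'] at h3
      linarith [hψ0 0]
    calc ∑ k ∈ Finset.range N, etilde κu κw πu πw μu αu αw 1 b c d k
        = ∑ k ∈ Finset.range N,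
            (P * ((αu * (κu ^ k)⁻¹ + αw * iota κu κw k * μu) / πu * b 1 ^ 2)
              + P * (αw * (κw ^ k)⁻¹ / πw * c 1 ^ 2)
              + ∑ j ∈ Finset.range k, P * (psi κu κw πu πw μu αu αw (k - j) * d (j + 1) ^ 2)) :=
          Finset.sum_congr rfl fun k _ => hE' k
      _ = (∑ k ∈ Finset.range N, P * ((αu * (κu ^ k)⁻¹ + αw * iota κu κw k * μu) / πu * b 1 ^ 2))
          + (∑ k ∈ Finset.range N, P * (αw * (κw ^ k)⁻¹ / πw * c 1 ^ 2))
          + ∑ k ∈ Finset.range N,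
              ∑ j ∈ Finset.range k, P * (psi κu κw πu πw μu αu αw (k - j) * d (j + 1) ^ 2) := by
          rw [Finset.sum_add_distrib, Finset.sum_add_distrib]
      _ ≤ P / πu * (αu * min κu κw / (min κu κw - 1) + αw * μu / (min κu κw - 1) ^ 2) * b 1 ^ 2
          + P / πw * (αw * min κu κw / (min κu κw - 1)) * c 1 ^ 2
          + P ^ 2 / max κu κw * ∑ j ∈ Finset.range (N - 1), d (j + 1) ^ 2 := by
        have hsum1 : ∑ k ∈ Finset.range N,
              P * ((αu * (κu ^ k)⁻¹ + αw * iota κu κw k * μu) / πu * b 1 ^ 2)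
            = P / πu * b 1 ^ 2 * αu * (∑ k ∈ Finset.range N, (κu ^ k)⁻¹)
              + P / πu * b 1 ^ 2 * (αw * μu) * (∑ k ∈ Finset.range N, iota κu κw k) := by
          rw [Finset.mul_sum, Finset.mul_sum, ← Finset.sum_add_distrib]
          exact Finset.sum_congr rfl fun k _ => by ring
        have hsum2 : ∑ k ∈ Finset.range N, P * (αw * (κw ^ k)⁻¹ / πw * c 1 ^ 2)
            = P / πw * c 1 ^ 2 * αw * (∑ k ∈ Finset.range N, (κw ^ k)⁻¹) := by
          rw [Finset.mul_sum]
          exact Finset.sum_congr rfl fun k _ => by ring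
        have hb1 : ∑ k ∈ Finset.range N,
              P * ((αu * (κu ^ k)⁻¹ + αw * iota κu κw k * μu) / πu * b 1 ^ 2)
            ≤ P / πu * (αu * min κu κw / (min κu κw - 1) + αw * μu / (min κu κw - 1) ^ 2)
              * b 1 ^ 2 := by
          rw [hsum1]
          have hgeo := geom_sum_le' hκ (min_le_left κu κw) N
          have hio := iota_sum_le' hκu hκw N
          have c1nn : 0 ≤ P / πu * b 1 ^ 2 * αu := by positivity
          have c2nn : 0 ≤ P / πu * b 1 ^ 2 * (αw * μu) := by positivity
          calc P / πu * b 1 ^ 2 * αu * (∑ k ∈ Finset.range N, (κu ^ k)⁻¹)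
                + P / πu * b 1 ^ 2 * (αw * μu) * (∑ k ∈ Finset.range N, iota κu κw k)
              ≤ P / πu * b 1 ^ 2 * αu * (min κu κw / (min κu κw - 1))
                + P / πu * b 1 ^ 2 * (αw * μu) * (1 / (min κu κw - 1) ^ 2) :=
                add_le_add (mul_le_mul_of_nonneg_left hgeo c1nn)
                  (mul_le_mul_of_nonneg_left hio c2nn)
            _ = P / πu * (αu * min κu κw / (min κu κw - 1)
                + αw * μu / (min κu κw - 1) ^ 2) * b 1 ^ 2 := by ring
        have hc1 : ∑ k ∈ Finset.range N, P * (αw * (κw ^ k)⁻¹ / πw * c 1 ^ 2)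
            ≤ P / πw * (αw * min κu κw / (min κu κw - 1)) * c 1 ^ 2 := by
          rw [hsum2]
          have hgeo := geom_sum_le' hκ (min_le_right κu κw) N
          have c1nn : 0 ≤ P / πw * c 1 ^ 2 * αw := by positivity
          calc P / πw * c 1 ^ 2 * αw * (∑ k ∈ Finset.range N, (κw ^ k)⁻¹)
              ≤ P / πw * c 1 ^ 2 * αw * (min κu κw / (min κu κw - 1)) :=
                mul_le_mul_of_nonneg_left hgeo c1nn
            _ = P / πw * (αw * min κu κw / (min κu κw - 1)) * c 1 ^ 2 := by ring
        have hd1 : ∑ k ∈ Finset.range N,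
              ∑ j ∈ Finset.range k, P * (psi κu κw πu πw μu αu αw (k - j) * d (j + 1) ^ 2)
            ≤ P ^ 2 / max κu κw * ∑ j ∈ Finset.range (N - 1), d (j + 1) ^ 2 := by
          have hstep : ∑ k ∈ Finset.range N,
                ∑ j ∈ Finset.range k, P * (psi κu κw πu πw μu αu αw (k - j) * d (j + 1) ^ 2)
              = P * ∑ k ∈ Finset.range N,
                  ∑ j ∈ Finset.range k, psi κu κw πu πw μu αu αw (k - j) * d (j + 1) ^ 2 := by
            rw [Finset.mul_sum]
            exact Finset.sum_congr rfl fun k _ => by rw [Finset.mul_sum]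
          rw [hstep, swap_sum' (psi κu κw πu πw μu αu αw) (fun j => d (j + 1) ^ 2) N]
          have hbd : ∑ j ∈ Finset.range (N - 1),
                (∑ i ∈ Finset.range (N - 1 - j), psi κu κw πu πw μu αu αw (i + 1))
                  * d (j + 1) ^ 2
              ≤ (∑' j : ℕ, psi κu κw πu πw μu αu αw j)
                  * ∑ j ∈ Finset.range (N - 1), d (j + 1) ^ 2 := by
            rw [Finset.mul_sum]
            apply Finset.sum_le_sum
            intro j _
            exact mul_le_mul_of_nonneg_right (htail _) (sq_nonneg _)
          have hfin : P * ((∑' j : ℕ, psi κu κw πu πw μu αu αw j)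
                * ∑ j ∈ Finset.range (N - 1), d (j + 1) ^ 2)
              = P ^ 2 / max κu κw * ∑ j ∈ Finset.range (N - 1), d (j + 1) ^ 2 := by
            rw [hPeq]
            field_simp
          calc P * ∑ j ∈ Finset.range (N - 1),
                (∑ i ∈ Finset.range (N - 1 - j), psi κu κw πu πw μu αu αw (i + 1))
                  * d (j + 1) ^ 2
              ≤ P * ((∑' j : ℕ, psi κu κw πu πw μu αu αw j)
                  * ∑ j ∈ Finset.range (N - 1), d (j + 1) ^ 2) :=
                mul_le_mul_of_nonneg_left hbd hP0
            _ = _ := hfin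
        linarith
end

section
/- In the setting of the inexact forward–backward quasi-monotonicity theorem (X normed, M self-adjoint positive semi-definite, iterates x^k with v^{k+1} := −M(x^{k+1} − x^k), gap 𝒢 built from F, G, Ξ, set Ω ∋ x^0, constants η > 0, Λ̆ ≤ 2(1−η)M, errors ε_k with r := sup_N Σ_{k<N} ε_k < ∞, the descent inequality ⟨v^{k+1}, x^{k+1} − x^k⟩ ≥ 𝒢(x^{k+1}; x^k) − (1/2)‖x^{k+1} − x^k‖_{Λ̆}² − ε_k whenever x^0,…,x^k ∈ Ω, and the implication Σ_{k<N} 𝒢(x^{k+1}; x^k) ≤ r ⟹ x^N ∈ Ω), assume additionally: (iv) there is η̃ ∈ [0, η) with inf_{N∈ℕ} Σ_{k=0}^{N−1} ( 𝒢(x^{k+1}; x^k) + η̃ ‖x^{k+1} − x^k‖_M² ) > −∞; F is Fréchet differentiable with derivative F′ : X → X*, and H(x) := { F′(x) + q + Ξx : q ∈ ∂G(x) } ⊆ X*; and whenever sup_N Σ_{k<N} ‖x^{k+1} − x^k‖_M² < ∞, one has inf_{x* ∈ H(x^{k+1})} ‖x* − v^{k+1}‖_{X*} → 0 as k → ∞.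 Then sup_N Σ_{k<N} ‖x^{k+1} − x^k‖_M² < ∞, ‖v^{k+1}‖_{X*} → 0, and inf_{x* ∈ H(x^{k+1})} ‖x*‖_{X*} → 0 as k → ∞. -/
/-!
While the iterates stay in `Ω`, the descent inequality and `Λ̆ ≤ 2(1 - η)M` give
`𝒢(x^{k+1}; x^k) ≤ ε_k - η ‖x^{k+1} - x^k‖²_M ≤ ε_k`; as the partial sums of `ε` are at most `r`,
the hypothesis on `Ω` keeps the next iterate in `Ω`, so by induction all iterates lie in `Ω`.
Summing the first bound and comparing with the lower bound (iv) gives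
`(η - η̃) Σ_{k<N} ‖x^{k+1} - x^k‖²_M ≤ r - L`. Cauchy–Schwarz for `M` yields
`‖M d‖² ≤ ‖M‖ ‖d‖²_M`, so `v^{k+1} → 0`, and then the distance from `0` to `H(x^{k+1})` is at most
its distance from `v^{k+1}` plus `‖v^{k+1}‖`.
-/

open Filter Finset Topology
open scoped ENNReal

@[norm_cast]
theorem EReal.coe_finset_sum {ι : Type*} (s : Finset ι) (f : ι → ℝ) :
    ((∑ i ∈ s, f i : ℝ) : EReal) = ∑ i ∈ s, (f i : EReal) :=
  map_sum (⟨⟨Real.toEReal, EReal.coe_zero⟩, EReal.coe_add⟩ : ℝ →+ EReal) f s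

theorem EReal.le_coe_add_of_sub_sub_le {a : EReal} {b c d : ℝ} (h : a - b - c ≤ d) :
    a ≤ ((d + c + b : ℝ) : EReal) := by
  rw [EReal.sub_le_iff_le_add (.inl (coe_ne_bot _)) (.inl (coe_ne_top _)),
    EReal.sub_le_iff_le_add (.inl (coe_ne_bot _)) (.inl (coe_ne_top _))] at h
  exact_mod_cast h

namespace ContinuousLinearMap

variable {X : Type*} [NormedAddCommGroup X] [NormedSpace ℝ X] (M : X →L[ℝ] StrongDual ℝ X)

theorem norm_apply_le_sqrt_apply_self (hsymm : ∀ u v : X, M u v = M v u)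
    (hnonneg : ∀ u : X, 0 ≤ M u u) (u : X) : ‖M u‖ ≤ √(‖M‖ * M u u) := by
  refine (M u).opNorm_le_bound (Real.sqrt_nonneg _) fun v => ?_
  have hcs : (M u v) ^ 2 ≤ M u u * M v v :=
    LinearMap.BilinForm.apply_sq_le_of_symm M.toLinearMap₁₂ hnonneg ⟨hsymm⟩ u v
  have hvv : M v v ≤ ‖M‖ * ‖v‖ ^ 2 :=
    (le_abs_self _).trans ((M.le_opNorm₂ v v).trans_eq (by ring))
  rw [Real.norm_eq_abs, ← Real.sqrt_sq (norm_nonneg v),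
    ← Real.sqrt_mul (mul_nonneg (norm_nonneg M) (hnonneg u))]
  exact Real.abs_le_sqrt (by nlinarith [hnonneg u])

theorem tendsto_norm_apply_of_tendsto_apply_self (hsymm : ∀ u v : X, M u v = M v u)
    (hnonneg : ∀ u : X, 0 ≤ M u u) {ι : Type*} {l : Filter ι} {d : ι → X}
    (h : Tendsto (fun k => M (d k) (d k)) l (𝓝 0)) : Tendsto (fun k => ‖M (d k)‖) l (𝓝 0) := by
  have hsqrt : Tendsto (fun k => √(‖M‖ * M (d k) (d k))) l (𝓝 0) := by
    simpa using (h.const_mul ‖M‖).sqrt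
  exact squeeze_zero (fun _ => norm_nonneg _)
    (fun k => M.norm_apply_le_sqrt_apply_self hsymm hnonneg (d k)) hsqrt

end ContinuousLinearMap

theorem iInf_nnnorm_le_iInf_nnnorm_sub_add {E : Type*} [SeminormedAddCommGroup E]
    (S : Set E) (v : E) :
    ⨅ y ∈ S, (‖y‖₊ : ℝ≥0∞) ≤ (⨅ y ∈ S, (‖y - v‖₊ : ℝ≥0∞)) + ‖v‖₊ := by
  have := Metric.infEDist_le_infEDist_add_edist (x := (0 : E)) (y := v) (s := S)
  simp only [Metric.infEDist, edist_eq_enorm_sub, zero_sub, enorm_neg] at this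
  simpa only [enorm_eq_nnnorm, ← nnnorm_neg (_ - v), neg_sub] using this

theorem tendsto_iInf_nnnorm_of_tendsto_iInf_nnnorm_sub {E ι : Type*} [SeminormedAddCommGroup E]
    {l : Filter ι} {S : ι → Set E} {v : ι → E}
    (hS : Tendsto (fun k => ⨅ y ∈ S k, (‖y - v k‖₊ : ℝ≥0∞)) l (𝓝 0))
    (hv : Tendsto (fun k => ‖v k‖) l (𝓝 0)) :
    Tendsto (fun k => ⨅ y ∈ S k, (‖y‖₊ : ℝ≥0∞)) l (𝓝 0) := by
  have hv' : Tendsto (fun k => (‖v k‖₊ : ℝ≥0∞)) l (𝓝 0) := by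
    simpa [Function.comp_def, enorm_eq_nnnorm] using
      (continuous_enorm.tendsto (0 : E)).comp (tendsto_zero_iff_norm_tendsto_zero.2 hv)
  exact tendsto_of_tendsto_of_tendsto_of_le_of_le tendsto_const_nhds (by simpa using hS.add hv')
    (fun _ => zero_le) fun k => iInf_nnnorm_le_iInf_nnnorm_sub_add (S k) (v k)

theorem forall_of_sum_range_le_imp {P : ℕ → Prop} {g : ℕ → EReal} {ε : ℕ → ℝ} {r : ℝ}
    (h0 : P 0) (hstep : ∀ k, (∀ n ≤ k, P n) → g k ≤ ε k)
    (hr : ∀ N, ∑ k ∈ range N, ε k ≤ r)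
    (himp : ∀ N, 1 ≤ N → ∑ k ∈ range N, g k ≤ r → P N) (n : ℕ) : P n := by
  induction n using Nat.strong_induction_on with
  | _ N ih =>
    rcases Nat.eq_zero_or_pos N with rfl | hN
    · exact h0
    refine himp N hN ?_
    calc ∑ k ∈ range N, g k
        ≤ ∑ k ∈ range N, (ε k : EReal) :=
          sum_le_sum fun k hk => hstep k fun n hn => ih n (hn.trans_lt (mem_range.1 hk))
      _ ≤ r := by exact_mod_cast hr N

theorem sum_range_le_div_of_le_sub_mul {g : ℕ → EReal} {ε m : ℕ → ℝ} {r L η ηt : ℝ}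
    (hg : ∀ k, g k ≤ ((ε k - η * m k : ℝ) : EReal)) (hr : ∀ N, ∑ k ∈ range N, ε k ≤ r)
    (hlb : ∀ N, (L : EReal) ≤ ∑ k ∈ range N, (g k + ((ηt * m k : ℝ) : EReal)))
    (hη : ηt < η) (N : ℕ) : ∑ k ∈ range N, m k ≤ (r - L) / (η - ηt) := by
  have hL : L ≤ ∑ k ∈ range N, (ε k - η * m k + ηt * m k) := by
    refine EReal.coe_le_coe_iff.1 ((hlb N).trans ?_)
    rw [EReal.coe_finset_sum]
    exact sum_le_sum fun k _ => (add_le_add_left (hg k) _).trans_eq (by norm_cast)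
  rw [sum_add_distrib, sum_sub_distrib, ← mul_sum, ← mul_sum] at hL
  rw [le_div_iff₀ (sub_pos.2 hη)]
  linarith [hr N]

theorem stmt13_general {X : Type*} [NormedAddCommGroup X] [NormedSpace ℝ X]
    (M : X →L[ℝ] StrongDual ℝ X)
    (hMsa : ∀ u v : X, M u v = M v u) (hMpsd : ∀ u : X, 0 ≤ M u u)
    (x : ℕ → X)
    (gap : X → X → EReal)
    (Ω : Set X) (hx0 : x 0 ∈ Ω)
    (η : ℝ) (hη : 0 < η)
    (Λb : X →L[ℝ] StrongDual ℝ X)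
    (hΛbM : ∀ u : X, Λb u u ≤ 2 * (1 - η) * M u u)
    (ε : ℕ → ℝ) (r : ℝ)
    (hr : ∀ N : ℕ, ∑ k ∈ Finset.range N, ε k ≤ r)
    (hdesc : ∀ k : ℕ, (∀ n ≤ k, x n ∈ Ω) →
      gap (x (k + 1)) (x k)
          - (((1 / 2) * Λb (x (k + 1) - x k) (x (k + 1) - x k) : ℝ) : EReal)
          - ((ε k : ℝ) : EReal)
        ≤ (((-(M (x (k + 1) - x k))) (x (k + 1) - x k) : ℝ) : EReal))
    (hΩimp : ∀ N : ℕ, 1 ≤ N →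
      (∑ k ∈ Finset.range N, gap (x (k + 1)) (x k)) ≤ (r : EReal) → x N ∈ Ω)
    -- (iv) lower bound on the gap-plus-step sums
    (ηt : ℝ) (hηtη : ηt < η) (L : ℝ)
    (hlb : ∀ N : ℕ, (L : EReal) ≤
      ∑ k ∈ Finset.range N,
        (gap (x (k + 1)) (x k)
          + ((ηt * M (x (k + 1) - x k) (x (k + 1) - x k) : ℝ) : EReal)))
    (H : X → Set (StrongDual ℝ X))
    -- approximate continuity
    (happrox : (∃ C : ℝ, ∀ N : ℕ,
        ∑ k ∈ Finset.range N, M (x (k + 1) - x k) (x (k + 1) - x k) ≤ C) →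
      Tendsto (fun k : ℕ =>
          ⨅ xs ∈ H (x (k + 1)), (‖xs - (-(M (x (k + 1) - x k)))‖₊ : ℝ≥0∞))
        atTop (nhds 0)) :
    (∃ C : ℝ, ∀ N : ℕ,
        ∑ k ∈ Finset.range N, M (x (k + 1) - x k) (x (k + 1) - x k) ≤ C)
    ∧ Tendsto (fun k : ℕ => ‖-(M (x (k + 1) - x k))‖) atTop (nhds 0)
    ∧ Tendsto (fun k : ℕ => ⨅ xs ∈ H (x (k + 1)), (‖xs‖₊ : ℝ≥0∞))
        atTop (nhds 0) := by
  have hstep : ∀ k, (∀ n ≤ k, x n ∈ Ω) → gap (x (k + 1)) (x k)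
      ≤ ((ε k - η * M (x (k + 1) - x k) (x (k + 1) - x k) : ℝ) : EReal) := fun k hk =>
    (EReal.le_coe_add_of_sub_sub_le (hdesc k hk)).trans <| EReal.coe_le_coe_iff.2 <| by
      simp only [neg_apply]
      linarith [hΛbM (x (k + 1) - x k)]
  have hΩ : ∀ n, x n ∈ Ω := forall_of_sum_range_le_imp hx0
    (fun k hk => (hstep k hk).trans <| EReal.coe_le_coe_iff.2 <|
      sub_le_self _ (mul_nonneg hη.le (hMpsd _)))
    hr hΩimp
  have hbdd := sum_range_le_div_of_le_sub_mul (fun k => hstep k fun n _ => hΩ n) hr hlb hηtη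
  have hv : Tendsto (fun k => ‖-(M (x (k + 1) - x k))‖) atTop (𝓝 0) := by
    simpa only [norm_neg] using M.tendsto_norm_apply_of_tendsto_apply_self hMsa hMpsd
      (summable_of_sum_range_le (fun k => hMpsd _) hbdd).tendsto_atTop_zero
  exact ⟨⟨_, hbdd⟩, hv, tendsto_iInf_nnnorm_of_tendsto_iInf_nnnorm_sub (happrox ⟨_, hbdd⟩) hv⟩

theorem stmt13 {X : Type*} [NormedAddCommGroup X] [NormedSpace ℝ X]
    (M : X →L[ℝ] StrongDual ℝ X)
    (hMsa : ∀ u v : X, M u v = M v u) (hMpsd : ∀ u : X, 0 ≤ M u u)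
    (x : ℕ → X)
    (F : X → ℝ) (G : X → EReal)
    (hGproper : (∃ u, G u ≠ ⊤) ∧ ∀ u, G u ≠ ⊥)
    (Ξ : X →L[ℝ] StrongDual ℝ X)
    (hΞskew : ∀ u v : X, Ξ u v = -(Ξ v u))
    (gap : X → X → EReal)
    (hgap : ∀ u v : X,
      gap u v = ((F u : EReal) + G u) - ((F v : EReal) + G v) - ((Ξ u v : ℝ) : EReal))
    (Ω : Set X) (hx0 : x 0 ∈ Ω)
    (η : ℝ) (hη : 0 < η)
    (Λb : X →L[ℝ] StrongDual ℝ X)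
    (hΛbsa : ∀ u v : X, Λb u v = Λb v u)
    (hΛbM : ∀ u : X, Λb u u ≤ 2 * (1 - η) * M u u)
    (ε : ℕ → ℝ) (r : ℝ)
    (hr : ∀ N : ℕ, ∑ k ∈ Finset.range N, ε k ≤ r)
    (hdesc : ∀ k : ℕ, (∀ n ≤ k, x n ∈ Ω) →
      gap (x (k + 1)) (x k)
          - (((1 / 2) * Λb (x (k + 1) - x k) (x (k + 1) - x k) : ℝ) : EReal)
          - ((ε k : ℝ) : EReal)
        ≤ (((-(M (x (k + 1) - x k))) (x (k + 1) - x k) : ℝ) : EReal))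
    (hΩimp : ∀ N : ℕ, 1 ≤ N →
      (∑ k ∈ Finset.range N, gap (x (k + 1)) (x k)) ≤ (r : EReal) → x N ∈ Ω)
    -- (iv) lower bound on the gap-plus-step sums
    (ηt : ℝ) (hηt0 : 0 ≤ ηt) (hηtη : ηt < η) (L : ℝ)
    (hlb : ∀ N : ℕ, (L : EReal) ≤
      ∑ k ∈ Finset.range N,
        (gap (x (k + 1)) (x k)
          + ((ηt * M (x (k + 1) - x k) (x (k + 1) - x k) : ℝ) : EReal)))
    -- F Fréchet differentiable, H(x) = F'(x) + ∂G(x) + Ξx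
    (F' : X → StrongDual ℝ X) (hF' : ∀ u : X, HasFDerivAt F (F' u) u)
    (H : X → Set (StrongDual ℝ X))
    (hH : ∀ u : X, H u = {xs | ∃ q : StrongDual ℝ X,
      (∀ w : X, G u + ((q (w - u) : ℝ) : EReal) ≤ G w) ∧ xs = F' u + q + Ξ u})
    -- approximate continuity
    (happrox : (∃ C : ℝ, ∀ N : ℕ,
        ∑ k ∈ Finset.range N, M (x (k + 1) - x k) (x (k + 1) - x k) ≤ C) →
      Tendsto (fun k : ℕ =>
          ⨅ xs ∈ H (x (k + 1)), (‖xs - (-(M (x (k + 1) - x k)))‖₊ : ℝ≥0∞))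
        atTop (nhds 0)) :
    (∃ C : ℝ, ∀ N : ℕ,
        ∑ k ∈ Finset.range N, M (x (k + 1) - x k) (x (k + 1) - x k) ≤ C)
    ∧ Tendsto (fun k : ℕ => ‖-(M (x (k + 1) - x k))‖) atTop (nhds 0)
    ∧ Tendsto (fun k : ℕ => ⨅ xs ∈ H (x (k + 1)), (‖xs‖₊ : ℝ≥0∞))
        atTop (nhds 0) :=
  stmt13_general M hMsa hMpsd x gap Ω hx0 η hη Λb hΛbM ε r hr hdesc hΩimp ηt hηtη L hlb H happrox
end
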